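/- arXiv:1912.12606 — 4 statements merged into one kernel-verified Lean document; each statement's English description precedes it below -/
import Mathlib

section
/- Let λ ∈ ℂ with 0 < |λ| < 1, and let f(z) = Σ_{j≥0} c_j z^j have pre-periodic coefficients: c_{j+p} = c_j for all j ≥ ℓ+1, with f(λ) = 0. Define the Taylor polynomials f_k(λ) = Σ_{j=0}^{k} c_j λ^j. Then for every n ≥ 0, λ^p · f_{ℓ+1+n}(λ) = f_{ℓ+1+n+p}(λ). -/
/-!
Since `f(λ) = 0`, each Taylor polynomial is minus its tail: `f_k(λ) = -∑_{j>k} c_j λ^j`.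
For `k ≥ ℓ` periodicity of the coefficients makes multiplication by `λ^p` shift the tail
starting at `k + 1` to the one starting at `k + p + 1`.
-/

open Finset

theorem summable_mul_pow_of_norm_le_one {K : Type*} [NormedField K] [CompleteSpace K]
    {c : ℕ → K} (hc : ∀ j, ‖c j‖ ≤ 1) {x : K} (hx : ‖x‖ < 1) :
    Summable fun j ↦ c j * x ^ j :=
  (summable_norm_geometric_of_norm_lt_one hx).of_norm_bounded fun j ↦ by
    simpa only [norm_mul] using mul_le_of_le_one_left (norm_nonneg _) (hc j)

theorem sum_range_eq_neg_tsum_nat_add_of_tsum_eq_zero {G : Type*} [AddCommGroup G]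
    [TopologicalSpace G] [IsTopologicalAddGroup G] [T2Space G] {f : ℕ → G}
    (hf : Summable f) (hf₀ : ∑' j, f j = 0) (k : ℕ) :
    ∑ j ∈ range k, f j = -∑' j, f (j + k) :=
  eq_neg_of_add_eq_zero_left ((hf.sum_add_tsum_nat_add k).trans hf₀)

theorem pow_mul_tsum_nat_add_of_periodic {K : Type*} [Field K] [TopologicalSpace K]
    [IsTopologicalSemiring K] [T2Space K] {c : ℕ → K} {m p k : ℕ}
    (hper : ∀ j, m ≤ j → c (j + p) = c j) (hk : m ≤ k) (x : K) :
    x ^ p * ∑' j, c (j + k) * x ^ (j + k) = ∑' j, c (j + (k + p)) * x ^ (j + (k + p)) := by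
  rw [← tsum_mul_left]
  congr 1 with j
  rw [← add_assoc, hper (j + k) (by omega)]
  ring

theorem stmt_6_general (lam : ℂ) (hlt : ‖lam‖ < 1)
    (l p : ℕ) (c : ℕ → ℂ)
    (hc : ∀ j, c j = -1 ∨ c j = 0 ∨ c j = 1)
    (hper : ∀ j, l + 1 ≤ j → c (j + p) = c j)
    (hroot : (∑' j : ℕ, c j * lam ^ j) = 0) (n : ℕ) :
    lam ^ p * (∑ j ∈ Finset.range (l + 1 + n + 1), c j * lam ^ j) =
      ∑ j ∈ Finset.range (l + 1 + n + p + 1), c j * lam ^ j := by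
  have hc_norm (j : ℕ) : ‖c j‖ ≤ 1 := by rcases hc j with h | h | h <;> simp [h]
  have hsum := summable_mul_pow_of_norm_le_one hc_norm hlt
  rw [show l + 1 + n + p + 1 = l + 1 + n + 1 + p by omega,
    sum_range_eq_neg_tsum_nat_add_of_tsum_eq_zero hsum hroot,
    sum_range_eq_neg_tsum_nat_add_of_tsum_eq_zero hsum hroot, mul_neg,
    pow_mul_tsum_nat_add_of_periodic hper (by omega)]

/-- For a root `λ` of a power series with pre-periodic coefficients
(`c_{j+p} = c_j` for `j ≥ ℓ+1`), the Taylor polynomials satisfy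
`λ^p f_{ℓ+1+n}(λ) = f_{ℓ+1+n+p}(λ)`. -/
theorem stmt_6 (lam : ℂ) (hne : lam ≠ 0) (hlt : ‖lam‖ < 1)
    (l p : ℕ) (hp : 1 ≤ p) (c : ℕ → ℂ)
    (hc : ∀ j, c j = -1 ∨ c j = 0 ∨ c j = 1)
    (hper : ∀ j, l + 1 ≤ j → c (j + p) = c j)
    (hroot : (∑' j : ℕ, c j * lam ^ j) = 0) (n : ℕ) :
    lam ^ p * (∑ j ∈ Finset.range (l + 1 + n + 1), c j * lam ^ j) =
      ∑ j ∈ Finset.range (l + 1 + n + p + 1), c j * lam ^ j :=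
  stmt_6_general lam hlt l p c hc hper hroot n
end

section
/- For every λ ∈ ℂ with (√5-1)/2 < |λ| < 2/3 and 0 < arg(λ) < 5π/32, we have 1 - |λ| > |1 - λ|/2. -/
open Real Complex

lemma norm_one_sub_sq (z : ℂ) : ‖1 - z‖ ^ 2 = 1 - 2 * z.re + ‖z‖ ^ 2 := by
  rw [Complex.sq_norm, Complex.sq_norm, Complex.normSq_sub]
  simp only [map_one, one_mul, Complex.conj_re]
  ring

lemma seven_eighths_lt_cos {x : ℝ} (hx : |x| < 1 / 2) : 7 / 8 < Real.cos x := by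
  have hx2 : x ^ 2 < 1 / 4 := by
    rw [← sq_abs]
    nlinarith [abs_nonneg x]
  linarith [Real.one_sub_sq_div_two_le_cos (x := x)]

lemma seven_eighths_mul_norm_le_re {z : ℂ} (h : |z.arg| < 1 / 2) : 7 / 8 * ‖z‖ ≤ z.re := by
  rw [← Complex.norm_mul_cos_arg z, mul_comm]
  exact mul_le_mul_of_nonneg_left (seven_eighths_lt_cos h).le (norm_nonneg z)

/-- Squared, with `r = ‖z‖`, the claim is `3r² - 8r + 3 + 2 re z > 0`, and `re z ≥ 7r/8` bounds the
left side below by `3 (r - 3/4) (r - 4/3)`. -/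
lemma norm_one_sub_lt_two_mul_one_sub_norm {z : ℂ} (hz : ‖z‖ < 3 / 4)
    (hre : 7 / 8 * ‖z‖ ≤ z.re) : ‖1 - z‖ < 2 * (1 - ‖z‖) := by
  refine lt_of_pow_lt_pow_left₀ 2 (by linarith) ?_
  rw [norm_one_sub_sq]
  nlinarith [norm_nonneg z]

theorem stmt_7_general (lam : ℂ)
    (h2 : ‖lam‖ < 2 / 3)
    (h3 : 0 < lam.arg) (h4 : lam.arg < 5 * Real.pi / 32) :
    1 - ‖lam‖ > ‖1 - lam‖ / 2 := by
  have harg : |lam.arg| < 1 / 2 := by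
    rw [abs_of_pos h3]
    linarith [Real.pi_lt_d2]
  have hlt := norm_one_sub_lt_two_mul_one_sub_norm (by linarith) (seven_eighths_mul_norm_le_re harg)
  linarith

theorem stmt_7 (lam : ℂ)
    (h1 : (Real.sqrt 5 - 1) / 2 < ‖lam‖)
    (h2 : ‖lam‖ < 2 / 3)
    (h3 : 0 < lam.arg) (h4 : lam.arg < 5 * Real.pi / 32) :
    1 - ‖lam‖ > ‖1 - lam‖ / 2 :=
  stmt_7_general lam h2 h3 h4
end

section
/- Let λ ∈ ℂ with (√5-1)/2 < |λ| < 2/3 and 0 < arg(λ) < 5π/32, and suppose λ is a root of f(z) = Σ_{j=0}^{ℓ} c_j z^j + z^{ℓ+1}/(1-z). Then |f_{ℓ+1}(λ)| + |f_{ℓ+2}(λ)| > |λ|^{ℓ+2}/(1-|λ|), where f_k(λ) := Σ_{j=0}^{k} c_j λ^j denotes the Taylor polynomials (with c_j = 1 for j ≥ ℓ+1). -/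
/-!
At a root `λ` of `f`, the partial sums satisfy `f_{ℓ+1}(λ)(1-λ) = -λ^{ℓ+2}` and
`f_{ℓ+2}(λ)(1-λ) = -λ^{ℓ+3}`, so the left side equals `|λ|^{ℓ+2}(1+|λ|)/|1-λ|` and the claim
reduces to `|1-λ| < 1-|λ|²`. Squaring, this is `3|λ| - |λ|³ < 2 cos(arg λ)`, which holds in the
sector since `3r - r³ < 46/27` for `r < 2/3` and `cos(arg λ) > 7/8`.
-/

namespace Complex

lemma norm_one_sub_sq (z : ℂ) : ‖1 - z‖ ^ 2 = 1 - 2 * ‖z‖ * Real.cos z.arg + ‖z‖ ^ 2 := by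
  rw [mul_assoc, norm_mul_cos_arg, Complex.sq_norm, Complex.sq_norm, normSq_sub]
  simp only [map_one, one_mul, conj_re]
  ring

lemma norm_one_sub_lt_one_sub_sq_norm {z : ℂ} (hz : z ≠ 0) (hz1 : ‖z‖ < 1)
    (hcos : 3 * ‖z‖ - ‖z‖ ^ 3 < 2 * Real.cos z.arg) : ‖1 - z‖ < 1 - ‖z‖ ^ 2 := by
  have hr : 0 < ‖z‖ := norm_pos_iff.mpr hz
  have hsq : ‖1 - z‖ ^ 2 < (1 - ‖z‖ ^ 2) ^ 2 := by
    rw [norm_one_sub_sq]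
    nlinarith [mul_lt_mul_of_pos_left hcos hr]
  exact abs_lt_of_sq_lt_sq' hsq (by nlinarith) |>.2

lemma seven_div_eight_lt_cos_arg {z : ℂ} (h0 : 0 < z.arg) (h : z.arg < 5 * Real.pi / 32) :
    7 / 8 < Real.cos z.arg := by
  have hpi := Real.pi_lt_d2
  have hθ : z.arg < 1 / 2 := by linarith
  nlinarith [Real.one_sub_sq_div_two_le_cos (x := z.arg)]

end Complex

lemma add_pow_mul_one_sub_add_pow_succ {R : Type*} [CommRing R] {S z : R} {n : ℕ}
    (h : S * (1 - z) + z ^ n = 0) : (S + z ^ n) * (1 - z) + z ^ (n + 1) = 0 := by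
  linear_combination h

lemma norm_eq_of_mul_one_sub_add_pow {𝕜 : Type*} [NormedField 𝕜] {S z : 𝕜} {n : ℕ} (hz : z ≠ 1)
    (h : S * (1 - z) + z ^ n = 0) : ‖S‖ = ‖z‖ ^ n / ‖1 - z‖ := by
  have hz' : ‖1 - z‖ ≠ 0 := norm_ne_zero_iff.mpr (sub_ne_zero.mpr hz.symm)
  rw [eq_div_iff hz', ← norm_pow, ← norm_mul, eq_neg_of_add_eq_zero_right h, norm_neg]

lemma div_one_sub_lt_div_add_mul_div {p r d : ℝ} (hp : 0 < p) (hd : 0 < d) (hr : r < 1)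
    (h : d < 1 - r ^ 2) : p / (1 - r) < p / d + p * r / d := by
  rw [← add_div, div_lt_div_iff₀ (by linarith) hd]
  nlinarith [mul_lt_mul_of_pos_left h hp]

theorem stmt_13_general (lam : ℂ)
    (h2 : ‖lam‖ < 2 / 3)
    (h3 : 0 < lam.arg) (h4 : lam.arg < 5 * Real.pi / 32)
    (l : ℕ) (c : ℕ → ℂ)
    (hroot : (∑ j ∈ Finset.range (l + 1), c j * lam ^ j) +
      lam ^ (l + 1) / (1 - lam) = 0) :
    ‖(∑ j ∈ Finset.range (l + 1), c j * lam ^ j) + lam ^ (l + 1)‖ +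
    ‖(∑ j ∈ Finset.range (l + 1), c j * lam ^ j) + lam ^ (l + 1)
      + lam ^ (l + 2)‖ >
      ‖lam‖ ^ (l + 2) / (1 - ‖lam‖) := by
  set S := ∑ j ∈ Finset.range (l + 1), c j * lam ^ j
  have hlam0 : lam ≠ 0 := by rintro rfl; simp at h3
  have hlam1 : lam ≠ 1 := by rintro rfl; norm_num at h2
  have hS : S * (1 - lam) + lam ^ (l + 1) = 0 := by
    have := congrArg (· * (1 - lam)) hroot
    simpa only [add_mul, div_mul_cancel₀ _ (sub_ne_zero.mpr hlam1.symm), zero_mul] using this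
  have hS₁ := add_pow_mul_one_sub_add_pow_succ hS
  have hS₂ := add_pow_mul_one_sub_add_pow_succ hS₁
  rw [norm_eq_of_mul_one_sub_add_pow hlam1 hS₁, norm_eq_of_mul_one_sub_add_pow hlam1 hS₂,
    pow_succ _ (l + 2)]
  have hr : 0 < ‖lam‖ := norm_pos_iff.mpr hlam0
  have hcubic : 3 * ‖lam‖ - ‖lam‖ ^ 3 < 46 / 27 := by nlinarith [sq_nonneg (‖lam‖ - 2 / 3)]
  refine div_one_sub_lt_div_add_mul_div (by positivity)
    (norm_pos_iff.mpr (sub_ne_zero.mpr hlam1.symm)) (by linarith)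
    (Complex.norm_one_sub_lt_one_sub_sq_norm hlam0 (by linarith) ?_)
  linarith [Complex.seven_div_eight_lt_cos_arg h3 h4]

/-- For `λ` in the sector `S` and a root of a rational type `(ℓ,1)` power
series, `|f_{ℓ+1}(λ)| + |f_{ℓ+2}(λ)| > |λ|^{ℓ+2}/(1-|λ|)`. -/
theorem stmt_13 (lam : ℂ)
    (h1 : (Real.sqrt 5 - 1) / 2 < ‖lam‖)
    (h2 : ‖lam‖ < 2 / 3)
    (h3 : 0 < lam.arg) (h4 : lam.arg < 5 * Real.pi / 32)
    (l : ℕ) (c : ℕ → ℂ) (hc0 : c 0 = 1)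
    (hc : ∀ j ≤ l, c j = -1 ∨ c j = 0 ∨ c j = 1)
    (hroot : (∑ j ∈ Finset.range (l + 1), c j * lam ^ j) +
      lam ^ (l + 1) / (1 - lam) = 0) :
    ‖(∑ j ∈ Finset.range (l + 1), c j * lam ^ j) + lam ^ (l + 1)‖ +
    ‖(∑ j ∈ Finset.range (l + 1), c j * lam ^ j) + lam ^ (l + 1)
      + lam ^ (l + 2)‖ >
      ‖lam‖ ^ (l + 2) / (1 - ‖lam‖) :=
  stmt_13_general lam h2 h3 h4 l c hroot
end

section
/- Let λ be the root of f(z) = (1 + z + z² - 2z³)/(1 - z³) with λ ≈ -0.366 + 0.520i, i.e. λ satisfies 1 + λ + λ² = 2λ³, (√5-1)/2 < |λ| < 2/3, and 2π/3 < arg(λ) < 23π/32. Then 2|1 + λ| > |λ|²/(1-|λ|). -/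
/-! From `1 + λ + λ² = 2λ³` we get `1 + λ = λ²(2λ - 1)`, so with `r = |λ|` the claim reduces to
`2 |2λ - 1| (1 - r) > 1`. Since `arg λ > 2π/3`, `Re λ < -r/2`, whence
`|2λ - 1|² = 4r² - 4 Re λ + 1 > 4r² + 2r + 1`, and `4 (1 - r)² (4r² + 2r + 1) > 1` on `[0, 2/3]`. -/

open Real

namespace Complex

lemma re_lt_neg_half_norm_of_two_pi_div_three_lt_arg {z : ℂ} (h : 2 * π / 3 < arg z) :
    z.re < -(‖z‖ / 2) := by
  have hz : z ≠ 0 := by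
    rintro rfl
    rw [arg_zero] at h
    linarith [pi_pos]
  have hcos : Real.cos (arg z) < -(1 / 2) := by
    calc Real.cos (arg z) < Real.cos (2 * π / 3) :=
          Real.cos_lt_cos_of_nonneg_of_le_pi (by positivity) (arg_le_pi z) h
      _ = -(1 / 2) := by
          rw [show 2 * π / 3 = π - π / 3 by ring, Real.cos_pi_sub, Real.cos_pi_div_three]
  rw [← norm_mul_cos_arg z]
  nlinarith [norm_pos_iff.mpr hz]

lemma sq_norm_two_mul_sub_one (z : ℂ) : ‖2 * z - 1‖ ^ 2 = 4 * ‖z‖ ^ 2 - 4 * z.re + 1 := by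
  simp only [Complex.sq_norm, normSq_apply, sub_re, sub_im, mul_re, mul_im, one_re, one_im,
    re_ofNat, im_ofNat]
  ring

end Complex

lemma one_lt_two_mul_mul_one_sub {r s : ℝ} (hr₀ : 0 ≤ r) (hr : r ≤ 2 / 3) (hs : 0 ≤ s)
    (hrs : 4 * r ^ 2 + 2 * r + 1 < s ^ 2) : 1 < 2 * s * (1 - r) := by
  have hpoly : 1 ≤ 4 * (1 - r) ^ 2 * (4 * r ^ 2 + 2 * r + 1) := by
    nlinarith [mul_nonneg hr₀ (sub_nonneg.mpr hr), mul_nonneg (mul_nonneg hr₀ hr₀) hr₀]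
  have hsq : 1 < (2 * s * (1 - r)) ^ 2 := by
    nlinarith [pow_pos (show (0 : ℝ) < 1 - r by linarith) 2]
  nlinarith [mul_nonneg (mul_nonneg zero_le_two hs) (show (0 : ℝ) ≤ 1 - r by linarith)]

lemma one_lt_two_mul_norm_two_mul_sub_one_mul_one_sub_norm {z : ℂ} (harg : 2 * π / 3 < z.arg)
    (hnorm : ‖z‖ < 2 / 3) : 1 < 2 * ‖2 * z - 1‖ * (1 - ‖z‖) := by
  have hre := Complex.re_lt_neg_half_norm_of_two_pi_div_three_lt_arg harg
  refine one_lt_two_mul_mul_one_sub (norm_nonneg z) hnorm.le (norm_nonneg _) ?_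
  rw [Complex.sq_norm_two_mul_sub_one]
  linarith

theorem stmt_15_general (lam : ℂ) (heq : 1 + lam + lam ^ 2 = 2 * lam ^ 3)
    (h2 : ‖lam‖ < 2 / 3)
    (h3 : 2 * Real.pi / 3 < lam.arg) :
    2 * ‖1 + lam‖ >
      (‖lam‖) ^ 2 / (1 - ‖lam‖) := by
  have hfactor : 1 + lam = lam ^ 2 * (2 * lam - 1) := by linear_combination heq
  have hlam : lam ≠ 0 := by
    rintro rfl
    norm_num at heq
  have hr : 0 < ‖lam‖ ^ 2 := by positivity
  have hkey := one_lt_two_mul_norm_two_mul_sub_one_mul_one_sub_norm h3 h2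
  rw [hfactor, norm_mul, norm_pow, gt_iff_lt, div_lt_iff₀ (by linarith)]
  nlinarith [mul_lt_mul_of_pos_left hkey hr]

/-- For the landmark point `λ₅` (root of `1+z+z²-2z³` with the stated modulus
and argument bounds), `2|1+λ| > |λ|²/(1-|λ|)`. -/
theorem stmt_15 (lam : ℂ) (heq : 1 + lam + lam ^ 2 = 2 * lam ^ 3)
    (h1 : (Real.sqrt 5 - 1) / 2 < ‖lam‖)
    (h2 : ‖lam‖ < 2 / 3)
    (h3 : 2 * Real.pi / 3 < lam.arg) (h4 : lam.arg < 23 * Real.pi / 32) :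
    2 * ‖1 + lam‖ >
      (‖lam‖) ^ 2 / (1 - ‖lam‖) :=
  stmt_15_general lam heq h2 h3
end
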